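/- Define the sequence r_n for even positive integers n ≥ 2 by r_n = π^{(n²-4)/(8n)} / (2^{(n-2)/4} · (∏_{k=1}^{(n-2)/2} Γ((6k+1)/(4k+2))^{2k+1})^{1/n}). Define C_{ℝ,2} = 2^{1/2}, C_{ℝ,3} = 2^{5/6}, and recursively C_{ℝ,n} = 2^{1/2} · (C_{ℝ,n-2} / A_{(2n-4)/(n-1)}²)^{(n-2)/n} for n > 3, where A_p = √2 · (Γ((p+1)/2)/√π)^{1/p}. Then for every even positive integer n, C_{ℝ,n} = 2^{(n+2)/8} · r_n. -/
import Mathlib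


open Real Finset

/-- `A p = √2 (Γ((p+1)/2)/√π)^{1/p}`, the Khintchine constant formula. -/
noncomputable def A (p : ℝ) : ℝ :=
  Real.sqrt 2 * (Real.Gamma ((p + 1) / 2) / Real.sqrt π) ^ (1 / p)

noncomputable def r (n : ℕ) : ℝ :=
  π ^ (((n : ℝ) ^ 2 - 4) / (8 * (n : ℝ))) /
    ((2 : ℝ) ^ (((n : ℝ) - 2) / 4) *
      (∏ k ∈ Finset.Icc 1 ((n - 2) / 2),
        Real.Gamma ((6 * (k : ℝ) + 1) / (4 * (k : ℝ) + 2)) ^ (2 * (k : ℝ) + 1)) ^ (1 / (n : ℝ)))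


noncomputable def P (m : ℕ) : ℝ :=
  ∏ k ∈ Finset.Icc 1 m, Real.Gamma ((6 * (k : ℝ) + 1) / (4 * (k : ℝ) + 2)) ^ (2 * (k : ℝ) + 1)

lemma g_pos (x : ℝ) (hx : 0 < x) : (0:ℝ) < Real.Gamma x := Real.Gamma_pos_of_pos hx

lemma P_pos (m : ℕ) : 0 < P m := by
  refine Finset.prod_pos fun k _ => Real.rpow_pos_of_pos (g_pos _ ?_) _
  positivity

lemma r_eq (m : ℕ) : r (2 * m + 2) =
    π ^ (((2 * (m:ℝ) + 2) ^ 2 - 4) / (8 * (2 * (m:ℝ) + 2))) /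
      ((2:ℝ) ^ ((2 * (m:ℝ)) / 4) * P m ^ (1 / (2 * (m:ℝ) + 2))) := by
  unfold r P
  have h1 : (2 * m + 2 - 2) / 2 = m := by omega
  rw [h1]
  push_cast
  rw [show (2 * (m:ℝ) + 2 - 2) = 2 * (m:ℝ) from by ring]

lemma r_pos (m : ℕ) : 0 < r (2 * m + 2) := by
  rw [r_eq]
  have := P_pos m
  have := Real.pi_pos
  positivity

lemma log_r (m : ℕ) : Real.log (r (2 * m + 2)) =
    ((2 * (m:ℝ) + 2) ^ 2 - 4) / (8 * (2 * (m:ℝ) + 2)) * Real.log π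
      - (2 * (m:ℝ)) / 4 * Real.log 2
      - 1 / (2 * (m:ℝ) + 2) * Real.log (P m) := by
  have hP := P_pos m
  have hπ := Real.pi_pos
  rw [r_eq, Real.log_div (by positivity) (by positivity),
    Real.log_mul (by positivity) (by positivity),
    Real.log_rpow hπ, Real.log_rpow two_pos, Real.log_rpow hP]
  ring

lemma A_pos (p : ℝ) (hp : 0 < (p+1)/2) : 0 < A p := by
  unfold A
  have := g_pos _ hp
  positivity

lemma log_A (m : ℕ) :
    Real.log (A ((4 * (m:ℝ) + 4) / (2 * (m:ℝ) + 3))) =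
      Real.log 2 / 2 + (2 * (m:ℝ) + 3) / (4 * (m:ℝ) + 4) *
        (Real.log (Real.Gamma ((6 * ((m:ℝ)+1) + 1) / (4 * ((m:ℝ)+1) + 2))) - Real.log π / 2) := by
  unfold A
  have hm3 : (0:ℝ) < 2 * (m:ℝ) + 3 := by positivity
  have hm4 : (0:ℝ) < 4 * (m:ℝ) + 4 := by positivity
  have harg : ((4 * (m:ℝ) + 4) / (2 * (m:ℝ) + 3) + 1) / 2 = (6 * ((m:ℝ)+1) + 1) / (4 * ((m:ℝ)+1) + 2) := by
    rw [div_add' _ _ _ (ne_of_gt hm3), div_div]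
    rw [div_eq_div_iff (by positivity) (by positivity)]
    ring
  have hinv : 1 / ((4 * (m:ℝ) + 4) / (2 * (m:ℝ) + 3)) = (2 * (m:ℝ) + 3) / (4 * (m:ℝ) + 4) := by
    rw [one_div_div]
  rw [harg, hinv]
  have hπ := Real.pi_pos
  have hg := g_pos ((6 * ((m:ℝ)+1) + 1) / (4 * ((m:ℝ)+1) + 2)) (by positivity)
  rw [Real.log_mul (by positivity) (by positivity), Real.log_rpow (by positivity),
    Real.log_div (ne_of_gt hg) (by positivity), Real.log_sqrt (le_of_lt hπ),
    Real.log_sqrt (by norm_num)]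

lemma P_succ (m : ℕ) : P (m + 1) = P m *
    Real.Gamma ((6 * ((m:ℝ)+1) + 1) / (4 * ((m:ℝ)+1) + 2)) ^ (2 * ((m:ℝ)+1) + 1) := by
  unfold P
  rw [Finset.prod_Icc_succ_top (by omega)]
  push_cast
  rfl

lemma step (m : ℕ) :
    (2:ℝ) ^ ((1:ℝ)/2) *
      ((2:ℝ) ^ ((2 * (m:ℝ) + 2 + 2) / 8) * r (2 * m + 2) /
        (A ((4 * (m:ℝ) + 4) / (2 * (m:ℝ) + 3))) ^ 2) ^ ((2 * (m:ℝ) + 2) / (2 * (m:ℝ) + 4))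
      = (2:ℝ) ^ ((2 * (m:ℝ) + 4 + 2) / 8) * r (2 * (m+1) + 2) := by
  have hr := r_pos m
  have hr' := r_pos (m+1)
  have hA : 0 < A ((4 * (m:ℝ) + 4) / (2 * (m:ℝ) + 3)) := by
    apply A_pos
    positivity
  have hg := g_pos ((6 * ((m:ℝ)+1) + 1) / (4 * ((m:ℝ)+1) + 2)) (by positivity)
  have hbase : 0 < (2:ℝ) ^ ((2 * (m:ℝ) + 2 + 2) / 8) * r (2 * m + 2) /
      (A ((4 * (m:ℝ) + 4) / (2 * (m:ℝ) + 3))) ^ 2 := by positivity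
  have hL : 0 < (2:ℝ) ^ ((1:ℝ)/2) *
      ((2:ℝ) ^ ((2 * (m:ℝ) + 2 + 2) / 8) * r (2 * m + 2) /
        (A ((4 * (m:ℝ) + 4) / (2 * (m:ℝ) + 3))) ^ 2) ^ ((2 * (m:ℝ) + 2) / (2 * (m:ℝ) + 4)) := by
    positivity
  have hR : 0 < (2:ℝ) ^ ((2 * (m:ℝ) + 4 + 2) / 8) * r (2 * (m+1) + 2) := by positivity
  have hlog : Real.log ((2:ℝ) ^ ((1:ℝ)/2) *
      ((2:ℝ) ^ ((2 * (m:ℝ) + 2 + 2) / 8) * r (2 * m + 2) /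
        (A ((4 * (m:ℝ) + 4) / (2 * (m:ℝ) + 3))) ^ 2) ^ ((2 * (m:ℝ) + 2) / (2 * (m:ℝ) + 4)))
      = Real.log ((2:ℝ) ^ ((2 * (m:ℝ) + 4 + 2) / 8) * r (2 * (m+1) + 2)) := by
    rw [Real.log_mul (by positivity) (ne_of_gt (Real.rpow_pos_of_pos hbase _)),
      Real.log_rpow two_pos, Real.log_rpow hbase,
      Real.log_div (by positivity) (by positivity),
      Real.log_mul (by positivity) (ne_of_gt hr),
      Real.log_rpow two_pos, Real.log_pow,
      Real.log_mul (by positivity) (ne_of_gt hr'),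
      Real.log_rpow two_pos, log_A]
    have e1 : (2 * ((m:ℝ)+1) + 2) = 2 * (m:ℝ) + 4 := by ring
    have e2 : (2 * (m+1) + 2 : ℕ) = 2 * (m+1) + 2 := rfl
    rw [log_r m, log_r (m+1), P_succ m, Real.log_mul (ne_of_gt (P_pos m)) (by positivity),
      Real.log_rpow hg]
    push_cast
    have h1 : (2 * (m:ℝ) + 2) ≠ 0 := by positivity
    have h2 : (2 * (m:ℝ) + 4) ≠ 0 := by positivity
    have h3 : (2 * (m:ℝ) + 3) ≠ 0 := by positivity
    have h4 : (4 * (m:ℝ) + 4) ≠ 0 := by positivity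
    have h5 : (2 * ((m:ℝ)+1) + 2) ≠ 0 := by positivity
    field_simp
    ring
  have := congrArg Real.exp hlog
  rwa [Real.exp_log hL, Real.exp_log hR] at this

/-- Closed formula for the real Bohnenblust–Hille constants: if `C` satisfies the
recursion `C 2 = 2^{1/2}`, `C 3 = 2^{5/6}`,
`C n = 2^{1/2} (C (n-2) / A_{(2n-4)/(n-1)}²)^{(n-2)/n}` for `n > 3`, then for every
even positive `n`, `C n = 2^{(n+2)/8} · r n`. -/
theorem real_BH_closed_formula (C : ℕ → ℝ)
    (h2 : C 2 = (2 : ℝ) ^ ((1 : ℝ) / 2))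
    (h3 : C 3 = (2 : ℝ) ^ ((5 : ℝ) / 6))
    (hrec : ∀ n : ℕ, 3 < n →
      C n = (2 : ℝ) ^ ((1 : ℝ) / 2) *
        (C (n - 2) / (A ((2 * (n : ℝ) - 4) / ((n : ℝ) - 1))) ^ 2) ^ (((n : ℝ) - 2) / (n : ℝ)))
    (n : ℕ) (hn : Even n) (hn0 : 0 < n) :
    C n = (2 : ℝ) ^ (((n : ℝ) + 2) / 8) * r n := by
  have aux : ∀ m : ℕ, C (2 * m + 2) = (2:ℝ) ^ ((2 * (m:ℝ) + 2 + 2) / 8) * r (2 * m + 2) := by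
    intro m
    induction m with
    | zero =>
      have hr2 : r 2 = 1 := by
        have := r_eq 0
        simp only [Nat.mul_zero, Nat.zero_add] at this
        rw [this]
        norm_num [P]
      norm_num [hr2, h2]
    | succ k ih =>
      have hn4 : 3 < 2 * (k + 1) + 2 := by omega
      rw [hrec _ hn4]
      have hsub : 2 * (k + 1) + 2 - 2 = 2 * k + 2 := by omega
      rw [hsub, ih]
      have hstep := step k
      push_cast at hstep ⊢
      ring_nf at hstep ⊢
      exact hstep
  obtain ⟨m, hm⟩ : ∃ m, n = 2 * m + 2 := by
    obtain ⟨j, hj⟩ := hn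
    exact ⟨j - 1, by omega⟩
  subst hm
  rw [aux m]
  congr 1
  push_cast
  ring_nf
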